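/- Define φ ⇒ ψ := (φ → ψ) ∧ (¬ψ → ¬φ) and φ ⇔ ψ := (φ ⇒ ψ) ∧ (ψ ⇒ φ) in FDE+cmi. Then for all FDE values x, y: x ⇔ y is designated if and only if x = y. -/

import Mathlib

/-- Truth values of FDE: T, B (both), N (neither), F. T and B are designated. -/
inductive FDE : Type | T | B | N | F
deriving DecidableEq

instance : Fintype FDE := ⟨{FDE.T, FDE.B, FDE.N, FDE.F}, fun x => by cases x <;> simp⟩

namespace FDE

/-- Negation: swaps T and F, fixes B and N. -/
def neg : FDE → FDE | T => F | F => T | B => B | N => N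

/-- Lattice meet (conjunction): F bottom, T top, B and N incomparable. -/
def meet : FDE → FDE → FDE
  | T, y => y | x, T => x
  | F, _ => F | _, F => F
  | B, B => B | N, N => N
  | B, N => F | N, B => F

/-- Lattice join (disjunction). -/
def join : FDE → FDE → FDE
  | F, y => y | x, F => x
  | T, _ => T | _, T => T
  | B, B => B | N, N => N
  | B, N => T | N, B => T

/-- The cmi conditional: value of the consequent if the antecedent is designated
(T or B), and T otherwise. -/
def cmi : FDE → FDE → FDE
  | T, y => y | B, y => y
  | N, _ => T | F, _ => T

/-- Designated values of FDE are T and B. -/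
def designated (x : FDE) : Prop := x = T ∨ x = B

end FDE

/-- The contraposed conditional: x ⇒ y := (x → y) ∧ (¬y → ¬x). -/
def FDE.darr (x y : FDE) : FDE := FDE.meet (FDE.cmi x y) (FDE.cmi (FDE.neg y) (FDE.neg x))

/-- The strong biconditional: x ⇔ y := (x ⇒ y) ∧ (y ⇒ x). -/
def FDE.biff (x y : FDE) : FDE := FDE.meet (FDE.darr x y) (FDE.darr y x)

/-! Read an FDE value `x` as the pair (`x` is designated, `¬x` is designated), i.e. Belnap's
"told true" and "told false"; this pair determines `x`. The cmi conditional is designated exactly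
when it preserves designation and the meet is designated exactly when both conjuncts are, so
`x ⇔ y` is designated exactly when `x` and `y` agree on both coordinates, that is, when `x = y`. -/

namespace FDE

theorem designated_meet {x y : FDE} : designated (meet x y) ↔ designated x ∧ designated y := by
  cases x <;> cases y <;> simp [meet, designated]

theorem designated_cmi {x y : FDE} : designated (cmi x y) ↔ (designated x → designated y) := by
  cases x <;> cases y <;> simp [cmi, designated]

theorem designated_darr {x y : FDE} :
    designated (darr x y) ↔
      (designated x → designated y) ∧ (designated (neg y) → designated (neg x)) := by
  rw [darr, designated_meet, designated_cmi, designated_cmi]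

theorem designated_biff {x y : FDE} :
    designated (biff x y) ↔
      (designated x ↔ designated y) ∧ (designated (neg x) ↔ designated (neg y)) := by
  rw [biff, designated_meet, designated_darr, designated_darr]
  simp only [iff_def]
  tauto

theorem eq_iff_designated_iff_and_designated_neg_iff {x y : FDE} :
    x = y ↔ (designated x ↔ designated y) ∧ (designated (neg x) ↔ designated (neg y)) := by
  cases x <;> cases y <;> simp [neg, designated]

end FDE

/-- x ⇔ y is designated if and only if x = y. -/
theorem fde_biff_designated_iff_eq (x y : FDE) :
    FDE.designated (FDE.biff x y) ↔ x = y := by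
  rw [FDE.designated_biff, FDE.eq_iff_designated_iff_and_designated_neg_iff]
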